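/- arXiv:2209.04707 — 2 statements merged into one kernel-verified Lean document; each statement's English description precedes it below -/
import Mathlib

section
/- Let 0 < q < 1, let m be a nonnegative integer and let 0 ≤ α < 1. Let f = h + conj(g) with h(z) = z − Σ_{u=2}^∞ |a_u| z^u and g(z) = Σ_{u=1}^∞ |b_u| z^u, and suppose Σ_{u=2}^∞ [u]_q^m (|a_u| + |b_u|) ≤ 1 − α − |b_1| (i.e., f ∈ \bar{S}_H^q(m, α, u)). Then for every z with |z| = r < 1, |f(z)| ≤ (1 + |b_1|) r + (1/[2]_q^m)(1 − α − |b_1|) r². -/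
open Metric Complex

/-! Since `[u]_q^m ≥ [2]_q^m` for `u ≥ 2`, the hypothesis gives
`Σ_{u≥2} (|a_u| + |b_u|) ≤ (1 - α - |b_1|) / [2]_q^m`, and on `|z| = r < 1` every term
`|a_u| rᵘ`, `|b_u| rᵘ` with `u ≥ 2` is at most `r²` times its coefficient; the triangle
inequality on `f = h + conj g` does the rest. -/

/-- The `q`-integer `[u]_q = (1 - q^u)/(1 - q) = 1 + q + ⋯ + q^(u-1)`. -/
noncomputable def qInt (q : ℝ) (u : ℕ) : ℝ := (1 - q ^ u) / (1 - q)

section QInt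

variable {q : ℝ}

theorem qInt_one (hq1 : q < 1) : qInt q 1 = 1 := by
  rw [qInt, pow_one, div_self (sub_ne_zero.mpr hq1.ne')]

theorem qInt_le_qInt (hq0 : 0 ≤ q) (hq1 : q < 1) {k n : ℕ} (hkn : k ≤ n) :
    qInt q k ≤ qInt q n := by
  rw [qInt, qInt, div_le_div_iff_of_pos_right (sub_pos.mpr hq1)]
  linarith [pow_le_pow_of_le_one hq0 hq1.le hkn]

theorem one_le_qInt (hq0 : 0 ≤ q) (hq1 : q < 1) {n : ℕ} (hn : 1 ≤ n) : 1 ≤ qInt q n :=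
  qInt_one hq1 ▸ qInt_le_qInt hq0 hq1 hn

end QInt

section WeightedSum

variable {w c : ℕ → ℝ} {w₀ : ℝ}

theorem summable_of_summable_mul_of_le (hw₀ : 0 < w₀) (hw : ∀ u, w₀ ≤ w u)
    (hc : ∀ u, 0 ≤ c u) (hs : Summable fun u => w u * c u) : Summable c := by
  refine (hs.div_const w₀).of_nonneg_of_le hc fun u => ?_
  rw [le_div_iff₀ hw₀, mul_comm]
  exact mul_le_mul_of_nonneg_right (hw u) (hc u)

theorem mul_tsum_le_tsum_mul (hw : ∀ u, w₀ ≤ w u) (hc : ∀ u, 0 ≤ c u) (hsc : Summable c)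
    (hs : Summable fun u => w u * c u) : w₀ * ∑' u, c u ≤ ∑' u, w u * c u := by
  rw [← tsum_mul_left]
  exact (hsc.mul_left w₀).tsum_le_tsum (fun u => mul_le_mul_of_nonneg_right (hw u) (hc u)) hs

end WeightedSum

section PowerSeries

variable {𝕜 : Type*} [NormedDivisionRing 𝕜] {c : ℕ → 𝕜} {z : 𝕜}

theorem norm_mul_pow_add_le (hz : ‖z‖ ≤ 1) (u k : ℕ) :
    ‖c u * z ^ (u + k)‖ ≤ ‖c u‖ * ‖z‖ ^ k := by
  rw [norm_mul, norm_pow, pow_add]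
  gcongr
  exact mul_le_of_le_one_left (by positivity) (pow_le_one₀ (norm_nonneg z) hz)

theorem norm_tsum_mul_pow_add_le (hc : Summable fun u => ‖c u‖) (hz : ‖z‖ ≤ 1) (k : ℕ) :
    ‖∑' u, c u * z ^ (u + k)‖ ≤ (∑' u, ‖c u‖) * ‖z‖ ^ k :=
  tsum_of_norm_bounded (hc.hasSum.mul_right _) (norm_mul_pow_add_le hz · k)

theorem norm_tsum_mul_pow_succ_le [CompleteSpace 𝕜] (hc : Summable fun u => ‖c (u + 1)‖)
    (hz : ‖z‖ ≤ 1) :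
    ‖∑' u, c u * z ^ (u + 1)‖ ≤ ‖c 0‖ * ‖z‖ + (∑' u, ‖c (u + 1)‖) * ‖z‖ ^ 2 := by
  have htail : Summable fun u => c (u + 1) * z ^ (u + 1 + 1) :=
    .of_norm_bounded (hc.mul_right _) (norm_mul_pow_add_le (c := fun u => c (u + 1)) hz · 2)
  rw [((summable_nat_add_iff (f := fun u => c u * z ^ (u + 1)) 1).mp htail).tsum_eq_zero_add]
  refine (norm_add_le _ _).trans (add_le_add ?_ (norm_tsum_mul_pow_add_le hc hz 2))
  rw [zero_add, pow_one, norm_mul]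

end PowerSeries

theorem growth_upper_bound_general
    (q α : ℝ) (hq0 : 0 < q) (hq1 : q < 1) (m : ℕ)
    (a b : ℕ → ℂ)
    (h g f : ℂ → ℂ)
    (hh : ∀ z ∈ ball (0 : ℂ) 1,
      h z = z - ∑' u : ℕ, ((‖a (u + 2)‖ : ℝ) : ℂ) * z ^ (u + 2))
    (hg : ∀ z ∈ ball (0 : ℂ) 1,
      g z = ∑' u : ℕ, ((‖b (u + 1)‖ : ℝ) : ℂ) * z ^ (u + 1))
    (hf : ∀ z ∈ ball (0 : ℂ) 1, f z = h z + (starRingEnd ℂ) (g z))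
    (hs : Summable fun u : ℕ =>
      qInt q (u + 2) ^ m * (‖a (u + 2)‖ + ‖b (u + 2)‖))
    (hcoef : (∑' u : ℕ,
        qInt q (u + 2) ^ m * (‖a (u + 2)‖ + ‖b (u + 2)‖)) ≤
      1 - α - ‖b 1‖) :
    ∀ z : ℂ, ‖z‖ < 1 →
      ‖f z‖ ≤ (1 + ‖b 1‖) * ‖z‖ +
        1 / qInt q 2 ^ m * (1 - α - ‖b 1‖) * ‖z‖ ^ 2 := by
  intro z hz
  have hzball : z ∈ ball (0 : ℂ) 1 := mem_ball_zero_iff.mpr hz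
  have hq2 : 1 ≤ qInt q 2 := one_le_qInt hq0.le hq1 one_le_two
  have hw₀ : 0 < qInt q 2 ^ m := pow_pos (one_pos.trans_le hq2) m
  have hw (u : ℕ) : qInt q 2 ^ m ≤ qInt q (u + 2) ^ m :=
    pow_le_pow_left₀ (zero_le_one.trans hq2) (qInt_le_qInt hq0.le hq1 (by omega)) m
  have hc (u : ℕ) : 0 ≤ ‖a (u + 2)‖ + ‖b (u + 2)‖ := by positivity
  have hsc := summable_of_summable_mul_of_le hw₀ hw hc hs
  have hsa : Summable fun u => ‖a (u + 2)‖ :=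
    hsc.of_nonneg_of_le (fun _ => norm_nonneg _) fun _ => le_add_of_nonneg_right (norm_nonneg _)
  have hsb : Summable fun u => ‖b (u + 2)‖ :=
    hsc.of_nonneg_of_le (fun _ => norm_nonneg _) fun _ => le_add_of_nonneg_left (norm_nonneg _)
  have hsum_le :
      (∑' u, ‖a (u + 2)‖) + ∑' u, ‖b (u + 2)‖ ≤ 1 / qInt q 2 ^ m * (1 - α - ‖b 1‖) := by
    rw [← hsa.tsum_add hsb, one_div, inv_mul_eq_div, le_div_iff₀ hw₀, mul_comm]
    exact (mul_tsum_le_tsum_mul hw hc hsc hs).trans hcoef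
  have hhz : ‖h z‖ ≤ ‖z‖ + (∑' u, ‖a (u + 2)‖) * ‖z‖ ^ 2 := by
    rw [hh z hzball]
    refine (norm_sub_le _ _).trans (add_le_add_right ?_ _)
    simpa using norm_tsum_mul_pow_add_le (c := fun u => ((‖a (u + 2)‖ : ℝ) : ℂ))
      (by simpa using hsa) hz.le 2
  have hgz : ‖g z‖ ≤ ‖b 1‖ * ‖z‖ + (∑' u, ‖b (u + 2)‖) * ‖z‖ ^ 2 := by
    rw [hg z hzball]
    simpa using norm_tsum_mul_pow_succ_le (c := fun u => ((‖b (u + 1)‖ : ℝ) : ℂ))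
      (by simpa using hsb) hz.le
  calc ‖f z‖ ≤ ‖h z‖ + ‖g z‖ := by
        rw [hf z hzball, ← Complex.norm_conj (g z)]
        exact norm_add_le _ _
    _ ≤ (1 + ‖b 1‖) * ‖z‖ + ((∑' u, ‖a (u + 2)‖) + ∑' u, ‖b (u + 2)‖) * ‖z‖ ^ 2 := by
      linarith
    _ ≤ _ := by gcongr

/-- Growth (upper bound): if `f = h + conj g` has negative coefficients and
`Σ_{u≥2} [u]_q^m (|a_u| + |b_u|) ≤ 1 - α - |b_1|`, then for `|z| = r < 1`,
`|f(z)| ≤ (1 + |b_1|) r + (1/[2]_q^m)(1 - α - |b_1|) r²`. -/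
theorem growth_upper_bound
    (q α : ℝ) (hq0 : 0 < q) (hq1 : q < 1) (m : ℕ)
    (hα0 : 0 ≤ α) (hα1 : α < 1)
    (a b : ℕ → ℂ)
    (h g f : ℂ → ℂ)
    (hh : ∀ z ∈ ball (0 : ℂ) 1,
      h z = z - ∑' u : ℕ, ((‖a (u + 2)‖ : ℝ) : ℂ) * z ^ (u + 2))
    (hg : ∀ z ∈ ball (0 : ℂ) 1,
      g z = ∑' u : ℕ, ((‖b (u + 1)‖ : ℝ) : ℂ) * z ^ (u + 1))
    (hf : ∀ z ∈ ball (0 : ℂ) 1, f z = h z + (starRingEnd ℂ) (g z))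
    (hs : Summable fun u : ℕ =>
      qInt q (u + 2) ^ m * (‖a (u + 2)‖ + ‖b (u + 2)‖))
    (hcoef : (∑' u : ℕ,
        qInt q (u + 2) ^ m * (‖a (u + 2)‖ + ‖b (u + 2)‖)) ≤
      1 - α - ‖b 1‖) :
    ∀ z : ℂ, ‖z‖ < 1 →
      ‖f z‖ ≤ (1 + ‖b 1‖) * ‖z‖ +
        1 / qInt q 2 ^ m * (1 - α - ‖b 1‖) * ‖z‖ ^ 2 :=
  growth_upper_bound_general q α hq0 hq1 m a b h g f hh hg hf hs hcoef
end

section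
/- Let 0 < q < 1, let m be a nonnegative integer and let 0 ≤ α < 1. If x_u ≥ 0 (u ≥ 2) and y_u ≥ 0 (u ≥ 1) satisfy x_1 ≥ 0 and Σ_{u=1}^∞ (x_u + y_u) = 1, and f(z) = Σ_{u=1}^∞ (x_u h_u(z) + y_u g_u(z)) where h_1(z) = z, h_u(z) = z − ((1 − α)/[u]_q^m) z^u for u ≥ 2 and g_u(z) = z − ((1 − α)/[u]_q^m) conj(z)^u for u ≥ 1, then the coefficients of f, namely a_u = ((1 − α)/[u]_q^m) x_u (u ≥ 2) and b_u = ((1 − α)/[u]_q^m) y_u (u ≥ 1), satisfy Σ_{u=2}^∞ [u]_q^m a_u + Σ_{u=1}^∞ [u]_q^m b_u = (1 − α)(1 − x_1) ≤ 1 − α, so f belongs to the class \bar{S}_H^q(m, α, u). -/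
open Metric Complex

/-! Each extreme function `h_u`, `g_u` has its single nonlinear coefficient `(1-α)/[u]_q^m` on
the boundary of the coefficient condition, so weighting it by `x_u` (resp. `y_u`) contributes
exactly `(1-α) x_u` (resp. `(1-α) y_u`) to the weighted coefficient sum. Since the weights add up to
`1` and `h_1(z) = z` contributes nothing, the total is `(1-α)(1 - x_1)`. -/

lemma qInt_pos {q : ℝ} (hq0 : 0 ≤ q) (hq1 : q < 1) {u : ℕ} (hu : u ≠ 0) : 0 < qInt q u :=
  div_pos (sub_pos.2 (pow_lt_one₀ hq0 hq1 hu)) (sub_pos.2 hq1)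

lemma tsum_qInt_pow_mul_eq_mul_tsum {q c : ℝ} (hq0 : 0 ≤ q) (hq1 : q < 1) (m n : ℕ)
    (hn : n ≠ 0) {a x : ℕ → ℝ} (ha : ∀ u, n ≤ u → a u = c / qInt q u ^ m * x u) :
    ∑' u, qInt q (u + n) ^ m * a (u + n) = c * ∑' u, x (u + n) := by
  rw [← tsum_mul_left]
  refine tsum_congr fun u => ?_
  have hq : qInt q (u + n) ^ m ≠ 0 := (pow_pos (qInt_pos hq0 hq1 (by omega)) m).ne'
  rw [ha (u + n) (Nat.le_add_left n u)]
  field_simp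

lemma summable_of_tsum_ne_zero {ι : Type*} {f : ι → ℝ} (h : ∑' i, f i ≠ 0) : Summable f :=
  by_contra fun hf => h (tsum_eq_zero_of_not_summable hf)

lemma tsum_add_two_add_tsum_add_one {x y : ℕ → ℝ} (hx : Summable fun u => x (u + 1))
    (hy : Summable fun u => y (u + 1)) :
    ∑' u, x (u + 2) + ∑' u, y (u + 1) = ∑' u, (x (u + 1) + y (u + 1)) - x 1 := by
  rw [hx.tsum_add hy, hx.tsum_eq_zero_add]
  ring

theorem convex_combination_mem_class_general
    (q α : ℝ) (hq0 : 0 < q) (hq1 : q < 1) (m : ℕ)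
    (hα1 : α < 1)
    (x y : ℕ → ℝ) (hx : ∀ u, 0 ≤ x u) (hy : ∀ u, 0 ≤ y u)
    (hxy : (∑' u : ℕ, (x (u + 1) + y (u + 1))) = 1)
    (a b : ℕ → ℝ)
    (ha : ∀ u : ℕ, 2 ≤ u → a u = (1 - α) / qInt q u ^ m * x u)
    (hb : ∀ u : ℕ, 1 ≤ u → b u = (1 - α) / qInt q u ^ m * y u) :
    (∑' u : ℕ, qInt q (u + 2) ^ m * a (u + 2)) +
      (∑' u : ℕ, qInt q (u + 1) ^ m * b (u + 1)) = (1 - α) * (1 - x 1) ∧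
    (1 - α) * (1 - x 1) ≤ 1 - α := by
  have hS : Summable fun u => x (u + 1) + y (u + 1) :=
    summable_of_tsum_ne_zero (by rw [hxy]; exact one_ne_zero)
  have hSx : Summable fun u => x (u + 1) :=
    hS.of_nonneg_of_le (fun _ => hx _) fun _ => le_add_of_nonneg_right (hy _)
  have hSy : Summable fun u => y (u + 1) :=
    hS.of_nonneg_of_le (fun _ => hy _) fun _ => le_add_of_nonneg_left (hx _)
  refine ⟨?_, mul_le_of_le_one_right (sub_nonneg.2 hα1.le) (by linarith [hx 1])⟩
  rw [tsum_qInt_pow_mul_eq_mul_tsum hq0.le hq1 m 2 two_ne_zero ha,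
    tsum_qInt_pow_mul_eq_mul_tsum hq0.le hq1 m 1 one_ne_zero hb, ← mul_add,
    tsum_add_two_add_tsum_add_one hSx hSy, hxy]

/-- If `x_u, y_u ≥ 0` with `Σ_{u≥1} (x_u + y_u) = 1` and
`f(z) = Σ_{u≥1} (x_u h_u(z) + y_u g_u(z))` where `h_1(z) = z`,
`h_u(z) = z - ((1-α)/[u]_q^m) z^u` for `u ≥ 2` and
`g_u(z) = z - ((1-α)/[u]_q^m) conj(z)^u` for `u ≥ 1`, then the coefficients
`a_u = ((1-α)/[u]_q^m) x_u` (`u ≥ 2`) and `b_u = ((1-α)/[u]_q^m) y_u` (`u ≥ 1`)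
satisfy `Σ_{u≥2} [u]_q^m a_u + Σ_{u≥1} [u]_q^m b_u = (1-α)(1-x_1) ≤ 1 - α`,
so `f` belongs to `S̄_H^q(m, α, u)`. -/
theorem convex_combination_mem_class
    (q α : ℝ) (hq0 : 0 < q) (hq1 : q < 1) (m : ℕ)
    (hα0 : 0 ≤ α) (hα1 : α < 1)
    (x y : ℕ → ℝ) (hx : ∀ u, 0 ≤ x u) (hy : ∀ u, 0 ≤ y u)
    (hxy : (∑' u : ℕ, (x (u + 1) + y (u + 1))) = 1)
    (f : ℂ → ℂ)
    (hf : ∀ z ∈ ball (0 : ℂ) 1,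
      f z = ∑' u : ℕ,
        ((x (u + 1) : ℂ) *
          (if u = 0 then z
            else z - (((1 - α) / qInt q (u + 1) ^ m : ℝ) : ℂ) * z ^ (u + 1)) +
        (y (u + 1) : ℂ) *
          (z - (((1 - α) / qInt q (u + 1) ^ m : ℝ) : ℂ) *
            ((starRingEnd ℂ) z) ^ (u + 1))))
    (a b : ℕ → ℝ)
    (ha : ∀ u : ℕ, 2 ≤ u → a u = (1 - α) / qInt q u ^ m * x u)
    (hb : ∀ u : ℕ, 1 ≤ u → b u = (1 - α) / qInt q u ^ m * y u) :
    (∑' u : ℕ, qInt q (u + 2) ^ m * a (u + 2)) +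
      (∑' u : ℕ, qInt q (u + 1) ^ m * b (u + 1)) = (1 - α) * (1 - x 1) ∧
    (1 - α) * (1 - x 1) ≤ 1 - α :=
  convex_combination_mem_class_general q α hq0 hq1 m hα1 x y hx hy hxy a b ha hb
end
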